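/- arXiv:2505.05493 — 4 statements merged into one kernel-verified Lean document; each statement's English description precedes it below -/
import Mathlib

section
/- Let f : ℝⁿ → ℝ be continuous with a unique global minimizer X, and suppose e^{-f} is integrable and for every ε > 0 there is δ > 0 such that f(x) ≥ f(X) + δ whenever ‖x - X‖ ≥ ε. Then for every continuous bounded function g : ℝⁿ → ℝ, the ratio (∫ g(x) e^{-τ f(x)} dx) / (∫ e^{-τ f(x)} dx) tends to g(X) as τ → ∞. -/
open MeasureTheory Filter

theorem gibbs_concentration {n : ℕ}
    (f : EuclideanSpace ℝ (Fin n) → ℝ) (X : EuclideanSpace ℝ (Fin n))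
    (hf : Continuous f)
    (hmin : ∀ x, x ≠ X → f X < f x)
    (hint : Integrable (fun x => Real.exp (-f x)))
    (hsep : ∀ ε > (0:ℝ), ∃ δ > (0:ℝ), ∀ x, ε ≤ ‖x - X‖ → f X + δ ≤ f x)
    (g : EuclideanSpace ℝ (Fin n) → ℝ) (hg : Continuous g)
    (hgb : ∃ M, ∀ x, |g x| ≤ M) :
    Tendsto (fun τ : ℝ =>
        (∫ x, g x * Real.exp (-τ * f x)) / (∫ x, Real.exp (-τ * f x)))
      atTop (nhds (g X)) := by
  obtain ⟨M, hM⟩ := hgb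
  have hM0 : 0 ≤ M := le_trans (abs_nonneg _) (hM X)
  set m := f X with hm
  have hfm : ∀ x, m ≤ f x := by
    intro x
    by_cases hx : x = X
    · rw [hx]
    · exact (hmin x hx).le
  -- integrability of the Gibbs factor for τ ≥ 1
  have hIF : ∀ τ : ℝ, 1 ≤ τ → Integrable (fun x => Real.exp (-τ * f x)) := by
    intro τ hτ
    have hc : Continuous fun x => Real.exp (-τ * f x) :=
      Real.continuous_exp.comp (continuous_const.mul hf)
    refine (hint.const_mul (Real.exp (-(τ - 1) * m))).mono
      hc.aestronglyMeasurable (Eventually.of_forall fun x => ?_)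
    rw [Real.norm_eq_abs, Real.norm_eq_abs, abs_of_nonneg (Real.exp_pos _).le,
      abs_of_nonneg (by positivity), ← Real.exp_add]
    exact Real.exp_le_exp.mpr (by nlinarith [hfm x])
  rw [Metric.tendsto_nhds]
  intro ε hε
  obtain ⟨r₁, hr₁pos, hr₁⟩ := Metric.continuous_iff.mp hg X (ε / 2) (half_pos hε)
  obtain ⟨δ, hδpos, hδ⟩ := hsep r₁ hr₁pos
  obtain ⟨r₂, hr₂pos, hr₂⟩ := Metric.continuous_iff.mp hf X (δ / 2) (half_pos hδpos)
  set v := (volume (Metric.ball X r₂)).toReal with hv_def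
  have hv : 0 < v := by
    refine ENNReal.toReal_pos (Metric.measure_ball_pos volume X hr₂pos).ne' ?_
    exact measure_ball_lt_top.ne
  set I := ∫ x, Real.exp (-f x) with hI_def
  have hI0 : 0 ≤ I := integral_nonneg fun x => (Real.exp_pos _).le
  set C := 2 * M * I * Real.exp (m + δ) / v with hC_def
  have key : ∀ τ : ℝ, 1 ≤ τ →
      dist ((∫ x, g x * Real.exp (-τ * f x)) / (∫ x, Real.exp (-τ * f x))) (g X)
        ≤ ε / 2 + C * Real.exp (-τ * (δ / 2)) := by
    intro τ hτ
    have hτ0 : (0:ℝ) < τ := lt_of_lt_of_le one_pos hτ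
    set F := fun x : EuclideanSpace ℝ (Fin n) => Real.exp (-τ * f x) with hF_def
    have hFc : Continuous F := Real.continuous_exp.comp (continuous_const.mul hf)
    have hFpos : ∀ x, 0 < F x := fun x => Real.exp_pos _
    have hZint : Integrable F := hIF τ hτ
    set Z := ∫ x, F x with hZ_def
    have hNint : Integrable (fun x => g x * F x) := by
      refine (hZint.const_mul M).mono (hg.mul hFc).aestronglyMeasurable
        (Eventually.of_forall fun x => ?_)
      rw [Real.norm_eq_abs, Real.norm_eq_abs, abs_mul, abs_mul,
        abs_of_nonneg (hFpos x).le, abs_of_nonneg hM0]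
      exact mul_le_mul_of_nonneg_right (hM x) (hFpos x).le
    -- lower bound on Z
    have hZlow : v * Real.exp (-τ * (m + δ / 2)) ≤ Z := by
      have h1 : ∫ _x in Metric.ball X r₂, Real.exp (-τ * (m + δ / 2))
          ≤ ∫ x in Metric.ball X r₂, F x := by
        refine setIntegral_mono_on (integrableOn_const measure_ball_lt_top.ne)
          hZint.integrableOn measurableSet_ball fun x hx => ?_
        have hfx : f x ≤ m + δ / 2 := by
          have := hr₂ x (by simpa [Metric.mem_ball] using hx)
          rw [Real.dist_eq] at this
          have := (abs_lt.mp this).2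
          linarith
        exact Real.exp_le_exp.mpr (by nlinarith)
      have h2 : ∫ x in Metric.ball X r₂, F x ≤ Z :=
        setIntegral_le_integral hZint (Eventually.of_forall fun x => (hFpos x).le)
      calc v * Real.exp (-τ * (m + δ / 2))
          = ∫ _x in Metric.ball X r₂, Real.exp (-τ * (m + δ / 2)) := by
            rw [setIntegral_const, smul_eq_mul]
            rfl
        _ ≤ Z := le_trans h1 h2
    have hZpos : 0 < Z := lt_of_lt_of_le (by positivity) hZlow
    -- numerator manipulation
    set Nn := ∫ x, g x * F x with hN_def
    have hGint : Integrable (fun x => (g x - g X) * F x) := by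
      have := hNint.sub (hZint.const_mul (g X))
      simpa [sub_mul, Pi.sub_def] using this
    have habsint : Integrable (fun x => |g x - g X| * F x) := by
      refine hGint.abs.congr (Eventually.of_forall fun x => ?_)
      simp only [abs_mul]
      rw [abs_of_nonneg (hFpos x).le]
    have hsub : Nn - g X * Z = ∫ x, (g x - g X) * F x := by
      rw [hN_def, hZ_def, ← integral_const_mul, ← integral_sub hNint (hZint.const_mul (g X))]
      simp [sub_mul]
    have habs : |Nn - g X * Z| ≤ ∫ x, |g x - g X| * F x := by
      rw [hsub]
      calc |∫ x, (g x - g X) * F x| ≤ ∫ x, |g x - g X| * |F x| := by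
            simpa [Real.norm_eq_abs, abs_mul] using
              norm_integral_le_integral_norm (fun x => (g x - g X) * F x)
        _ = ∫ x, |g x - g X| * F x := by
            congr 1; funext x; rw [abs_of_nonneg (hFpos x).le]
    -- split into ball and complement
    set B := Metric.ball X r₁ with hB_def
    set K := 2 * M * Real.exp (-(τ - 1) * (m + δ)) * I with hK_def
    have hK0 : 0 ≤ K := by positivity
    have hsplit : ∫ x, |g x - g X| * F x
        = (∫ x in B, |g x - g X| * F x) + ∫ x in Bᶜ, |g x - g X| * F x :=
      (integral_add_compl measurableSet_ball habsint).symm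
    have hball : ∫ x in B, |g x - g X| * F x ≤ ε / 2 * Z := by
      calc ∫ x in B, |g x - g X| * F x ≤ ∫ x in B, ε / 2 * F x := by
            refine setIntegral_mono_on habsint.integrableOn
              ((hZint.const_mul (ε / 2)).integrableOn) measurableSet_ball fun x hx => ?_
            refine mul_le_mul_of_nonneg_right ?_ (hFpos x).le
            have := hr₁ x (by simpa [hB_def, Metric.mem_ball] using hx)
            rw [Real.dist_eq] at this
            exact this.le
        _ = ε / 2 * ∫ x in B, F x := integral_const_mul _ _
        _ ≤ ε / 2 * Z := by
            refine mul_le_mul_of_nonneg_left ?_ (half_pos hε).le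
            exact setIntegral_le_integral hZint (Eventually.of_forall fun x => (hFpos x).le)
    have hcompl : ∫ x in Bᶜ, |g x - g X| * F x ≤ K := by
      have hb : ∀ x ∈ Bᶜ, |g x - g X| * F x
          ≤ (2 * M * Real.exp (-(τ - 1) * (m + δ))) * Real.exp (-f x) := by
        intro x hx
        have h1 : r₁ ≤ ‖x - X‖ := by
          have : ¬ dist x X < r₁ := by simpa [hB_def, Metric.mem_ball] using hx
          rw [dist_eq_norm] at this
          linarith [not_lt.mp this]
        have h2 : m + δ ≤ f x := hδ x h1
        have h3 : |g x - g X| ≤ 2 * M := by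
          calc |g x - g X| ≤ |g x| + |g X| := abs_sub _ _
            _ ≤ 2 * M := by linarith [hM x, hM X]
        have h4 : F x ≤ Real.exp (-(τ - 1) * (m + δ)) * Real.exp (-f x) := by
          rw [← Real.exp_add]
          exact Real.exp_le_exp.mpr (by nlinarith)
        calc |g x - g X| * F x
            ≤ (2 * M) * (Real.exp (-(τ - 1) * (m + δ)) * Real.exp (-f x)) :=
              mul_le_mul h3 h4 (hFpos x).le (by positivity)
          _ = (2 * M * Real.exp (-(τ - 1) * (m + δ))) * Real.exp (-f x) := by ring
      calc ∫ x in Bᶜ, |g x - g X| * F x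
          ≤ ∫ x in Bᶜ, (2 * M * Real.exp (-(τ - 1) * (m + δ))) * Real.exp (-f x) :=
            setIntegral_mono_on habsint.integrableOn
              ((hint.const_mul _).integrableOn) measurableSet_ball.compl hb
        _ ≤ ∫ x, (2 * M * Real.exp (-(τ - 1) * (m + δ))) * Real.exp (-f x) :=
            setIntegral_le_integral (hint.const_mul _)
              (Eventually.of_forall fun x => by positivity)
        _ = K := by rw [integral_const_mul]
    have hnum : |Nn - g X * Z| ≤ ε / 2 * Z + K := by
      calc |Nn - g X * Z| ≤ ∫ x, |g x - g X| * F x := habs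
        _ = _ := hsplit
        _ ≤ ε / 2 * Z + K := add_le_add hball hcompl
    -- convert to the ratio
    have hratio : dist (Nn / Z) (g X) = |Nn - g X * Z| / Z := by
      have he : Nn / Z - g X = (Nn - g X * Z) / Z := by
        field_simp
      rw [Real.dist_eq, he, abs_div, abs_of_pos hZpos]
    have hKZ : K / Z ≤ C * Real.exp (-τ * (δ / 2)) := by
      have h1 : K / Z ≤ K / (v * Real.exp (-τ * (m + δ / 2))) := by
        gcongr
      have hexp : Real.exp (-(τ - 1) * (m + δ))
          = Real.exp (m + δ) * Real.exp (-τ * (δ / 2)) * Real.exp (-τ * (m + δ / 2)) := by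
        rw [← Real.exp_add, ← Real.exp_add]
        congr 1
        ring
      have h2 : K / (v * Real.exp (-τ * (m + δ / 2))) = C * Real.exp (-τ * (δ / 2)) := by
        rw [hK_def, hC_def, hexp]
        field_simp
      linarith [h1, h2.le]
    calc dist (Nn / Z) (g X) = |Nn - g X * Z| / Z := hratio
      _ ≤ (ε / 2 * Z + K) / Z := by gcongr
      _ = ε / 2 + K / Z := by field_simp
      _ ≤ ε / 2 + C * Real.exp (-τ * (δ / 2)) := by linarith
  -- conclude by taking τ → ∞
  have h0 : Tendsto (fun τ : ℝ => C * Real.exp (-τ * (δ / 2))) atTop (nhds 0) := by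
    have h1 : Tendsto (fun τ : ℝ => τ * (δ / 2)) atTop atTop :=
      Tendsto.atTop_mul_const (half_pos hδpos) tendsto_id
    have h2 : Tendsto (fun τ : ℝ => Real.exp (-(τ * (δ / 2)))) atTop (nhds 0) :=
      Real.tendsto_exp_atBot.comp (tendsto_neg_atTop_atBot.comp h1)
    have h3 : Tendsto (fun τ : ℝ => C * Real.exp (-(τ * (δ / 2)))) atTop (nhds (C * 0)) :=
      h2.const_mul C
    simpa [neg_mul, mul_zero] using h3
  have h1 : ∀ᶠ τ : ℝ in atTop, C * Real.exp (-τ * (δ / 2)) < ε / 2 :=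
    h0.eventually_lt_const (half_pos hε)
  filter_upwards [eventually_ge_atTop (1:ℝ), h1] with τ hτ1 hτ2
  calc dist ((∫ x, g x * Real.exp (-τ * f x)) / (∫ x, Real.exp (-τ * f x))) (g X)
      ≤ ε / 2 + C * Real.exp (-τ * (δ / 2)) := key τ hτ1
    _ < ε := by linarith
end

section
/- Let f : ℝ → ℝ be continuous with a unique global minimizer X ∈ ℝ, suppose e^{-f} is integrable, and for every ε > 0 there is δ > 0 with f(x) ≥ f(X) + δ whenever |x - X| ≥ ε. Assume moreover that x ↦ x·e^{-f(x)} is integrable. Then lim_{τ→∞} (∫ x e^{-τ f(x)} dx) / (∫ e^{-τ f(x)} dx) = X. -/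
open MeasureTheory Filter

theorem gibbs_mean_tendsto_argmin
    (f : ℝ → ℝ) (X : ℝ)
    (hf : Continuous f)
    (hmin : ∀ x, x ≠ X → f X < f x)
    (hint : Integrable (fun x => Real.exp (-f x)))
    (hsep : ∀ ε > (0:ℝ), ∃ δ > (0:ℝ), ∀ x, ε ≤ |x - X| → f X + δ ≤ f x)
    (hxint : Integrable (fun x => x * Real.exp (-f x))) :
    Tendsto (fun τ : ℝ =>
        (∫ x, x * Real.exp (-τ * f x)) / (∫ x, Real.exp (-τ * f x)))
      atTop (nhds X) := by
  have hfmin : ∀ x, f X ≤ f x := by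
    intro x
    rcases eq_or_ne x X with h | h
    · rw [h]
    · exact (hmin x h).le
  -- measurability of the integrands
  have hcont : ∀ τ : ℝ, Continuous (fun x => Real.exp (-τ * f x)) := fun τ =>
    Real.continuous_exp.comp (continuous_const.mul hf)
  -- integrability of |x - X| * exp (-f x)
  have hg : Integrable (fun x => |x - X| * Real.exp (-f x)) := by
    have h1 : Integrable (fun x => (x - X) * Real.exp (-f x)) := by
      have := hxint.sub (hint.const_mul X)
      simpa [sub_mul, Pi.sub_def] using this
    simpa [abs_mul, abs_of_pos (Real.exp_pos _)] using h1.abs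
  -- pointwise exponential bound for τ ≥ 1
  have hbound : ∀ τ : ℝ, 1 ≤ τ → ∀ x,
      Real.exp (-τ * f x) ≤ Real.exp (-(τ - 1) * f X) * Real.exp (-f x) := by
    intro τ hτ x
    rw [← Real.exp_add]
    apply Real.exp_le_exp.2
    nlinarith [hfmin x]
  -- integrability of exp (-τ f) for τ ≥ 1
  have intD : ∀ τ : ℝ, 1 ≤ τ → Integrable (fun x => Real.exp (-τ * f x)) := by
    intro τ hτ
    refine (hint.const_mul (Real.exp (-(τ - 1) * f X))).mono
      (hcont τ).aestronglyMeasurable (Filter.Eventually.of_forall fun x => ?_)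
    have h := hbound τ hτ x
    have h1 : 0 < Real.exp (-(τ - 1) * f X) * Real.exp (-f x) := by positivity
    simp only [Real.norm_eq_abs, abs_of_pos (Real.exp_pos _), abs_of_pos h1]
    exact h
  -- integrability of x * exp (-τ f) for τ ≥ 1
  have intN : ∀ τ : ℝ, 1 ≤ τ → Integrable (fun x => x * Real.exp (-τ * f x)) := by
    intro τ hτ
    refine ((hxint.abs).const_mul (Real.exp (-(τ - 1) * f X))).mono
      ((continuous_id.mul (hcont τ)).aestronglyMeasurable)
      (Filter.Eventually.of_forall fun x => ?_)
    have h := hbound τ hτ x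
    simp only [Real.norm_eq_abs, abs_mul, abs_of_pos (Real.exp_pos _), abs_abs,
      abs_of_pos (Real.exp_pos (-(τ - 1) * f X))]
    calc |x| * Real.exp (-τ * f x)
        ≤ |x| * (Real.exp (-(τ - 1) * f X) * Real.exp (-f x)) := by
          exact mul_le_mul_of_nonneg_left h (abs_nonneg x)
      _ = Real.exp (-(τ - 1) * f X) * (|x| * Real.exp (-f x)) := by ring
  -- integrability of |x - X| * exp (-τ f) for τ ≥ 1
  have intAbs : ∀ τ : ℝ, 1 ≤ τ → Integrable (fun x => |x - X| * Real.exp (-τ * f x)) := by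
    intro τ hτ
    refine (hg.const_mul (Real.exp (-(τ - 1) * f X))).mono
      (((continuous_id.sub continuous_const).abs.mul (hcont τ)).aestronglyMeasurable)
      (Filter.Eventually.of_forall fun x => ?_)
    have h := hbound τ hτ x
    have h0 : (0:ℝ) ≤ |x - X| * Real.exp (-f x) := by positivity
    simp only [Real.norm_eq_abs, abs_mul, abs_abs, abs_of_pos (Real.exp_pos _),
      abs_of_nonneg h0]
    calc |x - X| * Real.exp (-τ * f x)
        ≤ |x - X| * (Real.exp (-(τ - 1) * f X) * Real.exp (-f x)) :=
          mul_le_mul_of_nonneg_left h (abs_nonneg _)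
      _ = Real.exp (-(τ - 1) * f X) * (|x - X| * Real.exp (-f x)) := by ring
  rw [Metric.tendsto_atTop]
  intro ε0 hε0
  -- separation constant
  obtain ⟨δ, hδ, hsepδ⟩ := hsep (ε0 / 2) (by positivity)
  -- small interval around X where f < f X + δ/2
  obtain ⟨r0, hr0, hball⟩ : ∃ r > (0:ℝ), ∀ x, |x - X| < r → f x < f X + δ / 2 := by
    have h := Metric.continuousAt_iff.1 (hf.continuousAt : ContinuousAt f X) (δ / 2) (by positivity)
    obtain ⟨r, hr, h⟩ := h
    refine ⟨r, hr, fun x hx => ?_⟩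
    have := h (show dist x X < r by simpa [Real.dist_eq] using hx)
    have h2 : f x - f X < δ / 2 := lt_of_le_of_lt (le_abs_self _) (by simpa [Real.dist_eq] using this)
    linarith
  set r := r0 / 2 with hr_def
  have hr : 0 < r := by positivity
  set C := ∫ x, |x - X| * Real.exp (-f x) with hC_def
  have hC : 0 ≤ C := integral_nonneg fun x => by positivity
  set K := C / (2 * r) * Real.exp (f X + δ) with hK_def
  have hK : 0 ≤ K := by positivity
  -- lower bound for the denominator
  have hD_lb : ∀ τ : ℝ, 1 ≤ τ →
      2 * r * Real.exp (-τ * (f X + δ / 2)) ≤ ∫ x, Real.exp (-τ * f x) := by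
    intro τ hτ
    have hτ0 : (0:ℝ) ≤ τ := le_trans zero_le_one hτ
    have hsub : ∫ x in Set.Icc (X - r) (X + r), Real.exp (-τ * (f X + δ / 2))
        ≤ ∫ x in Set.Icc (X - r) (X + r), Real.exp (-τ * f x) := by
      refine setIntegral_mono_on (integrableOn_const (by
        rw [Real.volume_Icc]; exact ENNReal.ofReal_ne_top))
        ((intD τ hτ).integrableOn) measurableSet_Icc (fun x hx => ?_)
      apply Real.exp_le_exp.2
      have hxr : |x - X| < r0 := by
        rw [abs_sub_lt_iff]
        constructor <;> [skip; skip] <;>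
          · obtain ⟨h1, h2⟩ := hx
            simp only [hr_def] at *
            linarith
      have := (hball x hxr).le
      nlinarith
    have hconst : ∫ x in Set.Icc (X - r) (X + r), Real.exp (-τ * (f X + δ / 2))
        = 2 * r * Real.exp (-τ * (f X + δ / 2)) := by
      rw [setIntegral_const, measureReal_def, Real.volume_Icc, smul_eq_mul,
        ENNReal.toReal_ofReal (by linarith)]
      ring_nf
    have htot : ∫ x in Set.Icc (X - r) (X + r), Real.exp (-τ * f x)
        ≤ ∫ x, Real.exp (-τ * f x) :=
      setIntegral_le_integral (intD τ hτ)
        (Filter.Eventually.of_forall fun x => (Real.exp_pos _).le)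
    linarith [hsub, htot, hconst.symm.le, hconst.le]
  -- the key bound
  have key : ∀ τ : ℝ, 1 ≤ τ →
      dist ((∫ x, x * Real.exp (-τ * f x)) / (∫ x, Real.exp (-τ * f x))) X
        ≤ ε0 / 2 + K * Real.exp (-τ * (δ / 2)) := by
    intro τ hτ
    set D := ∫ x, Real.exp (-τ * f x) with hD_def
    set N := ∫ x, x * Real.exp (-τ * f x) with hN_def
    have hDpos : 0 < D := lt_of_lt_of_le (by positivity) (hD_lb τ hτ)
    -- N - X * D = ∫ (x - X) exp (-τ f x)
    have hNXD : N - X * D = ∫ x, (x - X) * Real.exp (-τ * f x) := by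
      rw [hN_def, hD_def, ← integral_const_mul, ← integral_sub (intN τ hτ)
        ((intD τ hτ).const_mul X)]
      congr 1; ext x; ring
    -- split set
    set s : Set ℝ := {x | ε0 / 2 ≤ |x - X|} with hs_def
    have hs_meas : MeasurableSet s :=
      (isClosed_le continuous_const ((continuous_id.sub continuous_const).abs)).measurableSet
    have hsplit : (∫ x, |x - X| * Real.exp (-τ * f x))
        = (∫ x in s, |x - X| * Real.exp (-τ * f x))
          + ∫ x in sᶜ, |x - X| * Real.exp (-τ * f x) :=
      (integral_add_compl hs_meas (intAbs τ hτ)).symm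
    -- far part
    have hfar : (∫ x in s, |x - X| * Real.exp (-τ * f x))
        ≤ C * Real.exp (-(τ - 1) * (f X + δ)) := by
      have hpt : ∀ x ∈ s, |x - X| * Real.exp (-τ * f x)
          ≤ Real.exp (-(τ - 1) * (f X + δ)) * (|x - X| * Real.exp (-f x)) := by
        intro x hx
        have hfx : f X + δ ≤ f x := hsepδ x hx
        have : Real.exp (-τ * f x) ≤ Real.exp (-(τ - 1) * (f X + δ)) * Real.exp (-f x) := by
          rw [← Real.exp_add]
          apply Real.exp_le_exp.2
          nlinarith
        calc |x - X| * Real.exp (-τ * f x)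
            ≤ |x - X| * (Real.exp (-(τ - 1) * (f X + δ)) * Real.exp (-f x)) :=
              mul_le_mul_of_nonneg_left this (abs_nonneg _)
          _ = Real.exp (-(τ - 1) * (f X + δ)) * (|x - X| * Real.exp (-f x)) := by ring
      calc (∫ x in s, |x - X| * Real.exp (-τ * f x))
          ≤ ∫ x in s, Real.exp (-(τ - 1) * (f X + δ)) * (|x - X| * Real.exp (-f x)) := by
            refine setIntegral_mono_on ((intAbs τ hτ).integrableOn)
              ((hg.const_mul _).integrableOn) hs_meas hpt
        _ = Real.exp (-(τ - 1) * (f X + δ)) * ∫ x in s, |x - X| * Real.exp (-f x) := by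
            rw [integral_const_mul]
        _ ≤ Real.exp (-(τ - 1) * (f X + δ)) * C := by
            refine mul_le_mul_of_nonneg_left ?_ (Real.exp_pos _).le
            exact setIntegral_le_integral hg
              (Filter.Eventually.of_forall fun x => by positivity)
        _ = C * Real.exp (-(τ - 1) * (f X + δ)) := by ring
    -- near part
    have hnear : (∫ x in sᶜ, |x - X| * Real.exp (-τ * f x)) ≤ ε0 / 2 * D := by
      calc (∫ x in sᶜ, |x - X| * Real.exp (-τ * f x))
          ≤ ∫ x in sᶜ, ε0 / 2 * Real.exp (-τ * f x) := by
            refine setIntegral_mono_on ((intAbs τ hτ).integrableOn)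
              (((intD τ hτ).const_mul _).integrableOn) hs_meas.compl (fun x hx => ?_)
            have hx' : |x - X| < ε0 / 2 := by
              simpa [hs_def, not_le] using hx
            exact mul_le_mul_of_nonneg_right hx'.le (Real.exp_pos _).le
        _ = ε0 / 2 * ∫ x in sᶜ, Real.exp (-τ * f x) := integral_const_mul _ _
        _ ≤ ε0 / 2 * D := by
            refine mul_le_mul_of_nonneg_left ?_ (by positivity)
            exact setIntegral_le_integral (intD τ hτ)
              (Filter.Eventually.of_forall fun x => (Real.exp_pos _).le)
    -- combine
    have habs : |N - X * D| ≤ ε0 / 2 * D + C * Real.exp (-(τ - 1) * (f X + δ)) := by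
      rw [hNXD]
      calc |∫ x, (x - X) * Real.exp (-τ * f x)|
          ≤ ∫ x, |(x - X) * Real.exp (-τ * f x)| := by
            simpa only [Real.norm_eq_abs] using
              norm_integral_le_integral_norm (μ := volume)
                (fun x => (x - X) * Real.exp (-τ * f x))
        _ = ∫ x, |x - X| * Real.exp (-τ * f x) := by
            congr 1; ext x; rw [abs_mul, abs_of_pos (Real.exp_pos _)]
        _ = (∫ x in s, |x - X| * Real.exp (-τ * f x))
              + ∫ x in sᶜ, |x - X| * Real.exp (-τ * f x) := hsplit
        _ ≤ ε0 / 2 * D + C * Real.exp (-(τ - 1) * (f X + δ)) := by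
            linarith [hfar, hnear]
    -- exponent identity
    have hexp_id : K * Real.exp (-τ * (δ / 2)) * (2 * r * Real.exp (-τ * (f X + δ / 2)))
        = C * Real.exp (-(τ - 1) * (f X + δ)) := by
      rw [hK_def]
      rw [show C / (2 * r) * Real.exp (f X + δ) * Real.exp (-τ * (δ / 2))
          * (2 * r * Real.exp (-τ * (f X + δ / 2)))
        = C / (2 * r) * (2 * r) * (Real.exp (f X + δ) * Real.exp (-τ * (δ / 2))
          * Real.exp (-τ * (f X + δ / 2))) from by ring]
      rw [← Real.exp_add, ← Real.exp_add, div_mul_cancel₀ _ (by positivity : (2:ℝ) * r ≠ 0)]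
      congr 1
      ring
    have hCc2 : C * Real.exp (-(τ - 1) * (f X + δ)) ≤ K * Real.exp (-τ * (δ / 2)) * D := by
      rw [← hexp_id]
      exact mul_le_mul_of_nonneg_left (hD_lb τ hτ) (by positivity)
    have hfinal : |N - X * D| ≤ (ε0 / 2 + K * Real.exp (-τ * (δ / 2))) * D := by
      calc |N - X * D| ≤ ε0 / 2 * D + C * Real.exp (-(τ - 1) * (f X + δ)) := habs
        _ ≤ ε0 / 2 * D + K * Real.exp (-τ * (δ / 2)) * D := by linarith
        _ = (ε0 / 2 + K * Real.exp (-τ * (δ / 2))) * D := by ring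
    rw [Real.dist_eq]
    have hdiv : N / D - X = (N - X * D) / D := by field_simp
    rw [hdiv, abs_div, abs_of_pos hDpos, div_le_iff₀ hDpos]
    exact hfinal
  -- the exponential term tends to 0
  have htend : Tendsto (fun τ : ℝ => K * Real.exp (-τ * (δ / 2))) atTop (nhds 0) := by
    have h1 : Tendsto (fun τ : ℝ => -τ * (δ / 2)) atTop atBot :=
      (tendsto_neg_atTop_atBot).atBot_mul_const (by positivity)
    have h2 : Tendsto (fun τ : ℝ => Real.exp (-τ * (δ / 2))) atTop (nhds 0) :=
      Real.tendsto_exp_atBot.comp h1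
    simpa using h2.const_mul K
  have hev : ∀ᶠ τ : ℝ in atTop, K * Real.exp (-τ * (δ / 2)) < ε0 / 2 :=
    htend.eventually_lt_const (by positivity)
  obtain ⟨T, hT⟩ := (hev.and (eventually_ge_atTop (1:ℝ))).exists_forall_of_atTop
  refine ⟨max T 1, fun τ hτ => ?_⟩
  have hτ1 : 1 ≤ τ := le_trans (le_max_right T 1) hτ
  have hτT : T ≤ τ := le_trans (le_max_left T 1) hτ
  obtain ⟨hlt, -⟩ := hT τ hτT
  calc dist ((∫ x, x * Real.exp (-τ * f x)) / (∫ x, Real.exp (-τ * f x))) X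
      ≤ ε0 / 2 + K * Real.exp (-τ * (δ / 2)) := key τ hτ1
    _ < ε0 / 2 + ε0 / 2 := by linarith
    _ = ε0 := by ring
end

section
/- For every s ∈ ℂ with 0 < Re(s) and s ≠ 1, the series ∑_{n=1}^{∞} ( n/(n+1)^s − (n−s)/n^s ) converges and equals (s − 1)·ζ(s). -/
open Complex Filter Finset Set

noncomputable def zterm (s : ℂ) (n : ℕ) : ℂ :=
  ((n : ℂ) + 1) / ((n : ℂ) + 2) ^ s - (((n : ℂ) + 1) - s) / ((n : ℂ) + 1) ^ s

lemma natc_add_one_ne (n : ℕ) : ((n : ℂ) + 1) ≠ 0 := by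
  have : ((n : ℂ) + 1) = ((n + 1 : ℕ) : ℂ) := by push_cast; ring
  rw [this]
  exact_mod_cast Nat.succ_ne_zero n

lemma natc_add_two_ne (n : ℕ) : ((n : ℂ) + 2) ≠ 0 := by
  have : ((n : ℂ) + 2) = ((n + 2 : ℕ) : ℂ) := by push_cast; ring
  rw [this]
  exact_mod_cast Nat.succ_ne_zero (n + 1)

lemma cpow1_ne (n : ℕ) (s : ℂ) : ((n : ℂ) + 1) ^ s ≠ 0 := by
  rw [Ne, cpow_eq_zero_iff]
  simp [natc_add_one_ne n]

lemma cpow2_ne (n : ℕ) (s : ℂ) : ((n : ℂ) + 2) ^ s ≠ 0 := by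
  rw [Ne, cpow_eq_zero_iff]
  simp [natc_add_two_ne n]

/-- derivative of real-to-complex power -/
lemma hasDerivAt_real_cpow' (c : ℂ) (hc : c ≠ 0) {x : ℝ} (hx : 0 < x) :
    HasDerivAt (fun y : ℝ => (y : ℂ) ^ c) (c * (x : ℂ) ^ (c - 1)) x := by
  have h1 : c - 1 ≠ -1 := by
    intro h; apply hc; linear_combination h
  have h := (hasDerivAt_ofReal_cpow_const' hx.ne' h1).const_mul c
  have h2 : c - 1 + 1 = c := by ring
  rw [h2] at h
  have h3 : (fun y : ℝ => c * ((y : ℂ) ^ c / c)) = fun y : ℝ => (y : ℂ) ^ c := by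
    funext y; field_simp
  rwa [h3] at h

lemma norm_cpow_real (x : ℝ) (hx : 0 < x) (c : ℂ) : ‖(x : ℂ) ^ c‖ = x ^ c.re := by
  rw [norm_cpow_eq_rpow_re_of_pos hx]

/-- key pointwise bound -/
lemma zterm_bound (s : ℂ) (hs : 0 < s.re) (n : ℕ) :
    ‖zterm s n‖ ≤ ‖s‖ * ‖s + 1‖ * ((n : ℝ) + 1) ^ (-s.re - 1) := by
  set m : ℝ := (n : ℝ) + 1 with hm
  have hm1 : (1 : ℝ) ≤ m := by rw [hm]; exact le_add_of_nonneg_left (Nat.cast_nonneg n)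
  have hm0 : (0 : ℝ) < m := by linarith
  -- inner MVT : for t in [m, m+1], ‖t^(-s-1) - m^(-s-1)‖ ≤ ‖s+1‖ * m^(-s.re-2) * (t - m)
  have inner : ∀ t ∈ Icc m (m + 1),
      ‖(t : ℂ) ^ (-s - 1) - (m : ℂ) ^ (-s - 1)‖ ≤ ‖s + 1‖ * m ^ (-s.re - 2) * (t - m) := by
    intro t ht
    have key := norm_image_sub_le_of_norm_deriv_le_segment'
      (f := fun y : ℝ => (y : ℂ) ^ (-s - 1))
      (f' := fun y : ℝ => (-s - 1) * (y : ℂ) ^ (-s - 2)) (a := m) (b := m + 1)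
      (C := ‖s + 1‖ * m ^ (-s.re - 2)) ?_ ?_ t ht
    · simpa using key
    · intro x hx
      have hx0 : 0 < x := lt_of_lt_of_le hm0 hx.1
      have := hasDerivAt_real_cpow' (-s - 1) (by
        intro h; apply_fun Complex.re at h; simp at h; linarith) hx0
      have h2 : -s - 1 - 1 = -s - 2 := by ring
      rw [h2] at this
      exact this.hasDerivWithinAt
    · intro x hx
      have hx0 : 0 < x := lt_of_lt_of_le hm0 hx.1
      rw [norm_mul, norm_cpow_real x hx0]
      have hre : (-s - 2).re = -s.re - 2 := by simp
      rw [hre]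
      have h1 : ‖-s - 1‖ = ‖s + 1‖ := by rw [show -s - 1 = -(s + 1) by ring, norm_neg]
      rw [h1]
      have h2 : x ^ (-s.re - 2) ≤ m ^ (-s.re - 2) :=
        Real.rpow_le_rpow_of_nonpos hm0 hx.1 (by linarith)
      exact mul_le_mul_of_nonneg_left h2 (norm_nonneg _)
  -- outer MVT on g t = t^(-s) + s * m^(-s-1) * t
  have outer : ‖((m + 1 : ℝ) : ℂ) ^ (-s) - (m : ℂ) ^ (-s) + s * (m : ℂ) ^ (-s - 1)‖ ≤
      ‖s‖ * (‖s + 1‖ * m ^ (-s.re - 2)) := by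
    have key := norm_image_sub_le_of_norm_deriv_le_segment'
      (f := fun y : ℝ => (y : ℂ) ^ (-s) + s * (m : ℂ) ^ (-s - 1) * (y : ℂ))
      (f' := fun y : ℝ => s * ((m : ℂ) ^ (-s - 1) - (y : ℂ) ^ (-s - 1)))
      (a := m) (b := m + 1) (C := ‖s‖ * (‖s + 1‖ * m ^ (-s.re - 2))) ?_ ?_ (m + 1)
      (by constructor <;> simp)
    · have : (fun y : ℝ => (y : ℂ) ^ (-s) + s * (m : ℂ) ^ (-s - 1) * (y : ℂ)) (m + 1) -
          (fun y : ℝ => (y : ℂ) ^ (-s) + s * (m : ℂ) ^ (-s - 1) * (y : ℂ)) m =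
          ((m + 1 : ℝ) : ℂ) ^ (-s) - (m : ℂ) ^ (-s) + s * (m : ℂ) ^ (-s - 1) := by
        push_cast; ring
      rw [this] at key
      simpa using key
    · intro x hx
      have hx0 : 0 < x := lt_of_lt_of_le hm0 hx.1
      have hs0 : s ≠ 0 := by intro h; rw [h] at hs; simp at hs
      have hd1 := hasDerivAt_real_cpow' (-s) (neg_ne_zero.mpr hs0) hx0
      have h2 : -s - 1 = -s - 1 := rfl
      have hd2 : HasDerivAt (fun y : ℝ => s * (m : ℂ) ^ (-s - 1) * (y : ℂ))
          (s * (m : ℂ) ^ (-s - 1)) x := by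
        simpa using (Complex.ofRealCLM.hasDerivAt (x := x)).const_mul (s * (m : ℂ) ^ (-s - 1))
      have := hd1.add hd2
      have heq : -s * (x : ℂ) ^ (-s - 1) + s * (m : ℂ) ^ (-s - 1) =
          s * ((m : ℂ) ^ (-s - 1) - (x : ℂ) ^ (-s - 1)) := by ring
      rw [heq] at this
      exact this.hasDerivWithinAt
    · intro x hx
      rw [norm_mul]
      refine mul_le_mul_of_nonneg_left ?_ (norm_nonneg s)
      have h := inner x ⟨hx.1, hx.2.le⟩
      rw [show (m : ℂ) ^ (-s - 1) - (x : ℂ) ^ (-s - 1) =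
        -((x : ℂ) ^ (-s - 1) - (m : ℂ) ^ (-s - 1)) by ring, norm_neg]
      calc ‖(x : ℂ) ^ (-s - 1) - (m : ℂ) ^ (-s - 1)‖
          ≤ ‖s + 1‖ * m ^ (-s.re - 2) * (x - m) := h
        _ ≤ ‖s + 1‖ * m ^ (-s.re - 2) * 1 := by
            refine mul_le_mul_of_nonneg_left (by linarith [hx.2]) ?_
            positivity
        _ = ‖s + 1‖ * m ^ (-s.re - 2) := by ring
  -- express zterm via the MVT quantity
  have hexpr : zterm s n = ((n : ℂ) + 1) *
      (((m + 1 : ℝ) : ℂ) ^ (-s) - (m : ℂ) ^ (-s) + s * (m : ℂ) ^ (-s - 1)) := by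
    have hmc : (m : ℂ) = (n : ℂ) + 1 := by rw [hm]; push_cast; ring
    have hmc2 : ((m + 1 : ℝ) : ℂ) = (n : ℂ) + 2 := by rw [hm]; push_cast; ring
    rw [hmc2, hmc]
    have e1 : ((n : ℂ) + 2) ^ (-s) = (((n : ℂ) + 2) ^ s)⁻¹ := by rw [cpow_neg]
    have e2 : ((n : ℂ) + 1) ^ (-s) = (((n : ℂ) + 1) ^ s)⁻¹ := by rw [cpow_neg]
    have e4 : ((n : ℂ) + 1) * ((n : ℂ) + 1) ^ (-s - 1) = ((n : ℂ) + 1) ^ (-s) := by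
      rw [show -s - 1 = -1 + -s by ring, cpow_add _ _ (natc_add_one_ne n), cpow_neg_one,
        ← mul_assoc, mul_inv_cancel₀ (natc_add_one_ne n), one_mul]
    rw [zterm, div_eq_mul_inv, div_eq_mul_inv, ← e1, ← e2]
    linear_combination (-s) * e4
  rw [hexpr, norm_mul]
  have hn1 : ‖(n : ℂ) + 1‖ = m := by
    rw [show (n : ℂ) + 1 = ((m : ℝ) : ℂ) by rw [hm]; push_cast; ring]
    rw [Complex.norm_real, Real.norm_of_nonneg hm0.le]
  rw [hn1]
  calc m * ‖((m + 1 : ℝ) : ℂ) ^ (-s) - (m : ℂ) ^ (-s) + s * (m : ℂ) ^ (-s - 1)‖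
      ≤ m * (‖s‖ * (‖s + 1‖ * m ^ (-s.re - 2))) := by
        exact mul_le_mul_of_nonneg_left outer hm0.le
    _ = ‖s‖ * ‖s + 1‖ * (m ^ (1 : ℝ) * m ^ (-s.re - 2)) := by rw [Real.rpow_one]; ring
    _ = ‖s‖ * ‖s + 1‖ * m ^ (-s.re - 1) := by
        rw [← Real.rpow_add hm0, show (1 : ℝ) + (-s.re - 2) = -s.re - 1 by ring]

lemma summable_aux (p : ℝ) (hp : p < -1) : Summable (fun n : ℕ => ((n : ℝ) + 1) ^ p) := by
  have h : Summable (fun n : ℕ => ((n : ℝ)) ^ p) := Real.summable_nat_rpow.mpr hp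
  have h2 := (summable_nat_add_iff 1).mpr h
  refine h2.congr fun n => ?_
  push_cast
  rfl

lemma summable_zterm (s : ℂ) (hs : 0 < s.re) : Summable (zterm s) := by
  refine Summable.of_norm_bounded ((summable_aux (-s.re - 1) (by linarith)).mul_left
    (‖s‖ * ‖s + 1‖)) (zterm_bound s hs)

/-- telescoping partial sums -/
lemma zterm_partial (s : ℂ) (N : ℕ) :
    ∑ n ∈ Finset.range N, zterm s n =
      (N : ℂ) / ((N : ℂ) + 1) ^ s + (s - 1) * ∑ n ∈ Finset.range N, 1 / ((n : ℂ) + 1) ^ s := by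
  induction N with
  | zero => simp
  | succ N ih =>
    rw [Finset.sum_range_succ, Finset.sum_range_succ, ih, zterm]
    rw [show ((N + 1 : ℕ) : ℂ) = (N : ℂ) + 1 from by push_cast; ring]
    rw [show (N : ℂ) + 1 + 1 = (N : ℂ) + 2 from by ring]
    ring

lemma hasSum_zterm_of_one_lt (s : ℂ) (hs : 1 < s.re) :
    HasSum (zterm s) ((s - 1) * riemannZeta s) := by
  have hs0 : 0 < s.re := by linarith
  rw [(summable_zterm s hs0).hasSum_iff_tendsto_nat]
  have heq : (fun N : ℕ => ∑ n ∈ Finset.range N, zterm s n) =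
      fun N : ℕ => (N : ℂ) / ((N : ℂ) + 1) ^ s +
        (s - 1) * ∑ n ∈ Finset.range N, 1 / ((n : ℂ) + 1) ^ s := by
    funext N; exact zterm_partial s N
  rw [heq]
  have h0 : Tendsto (fun N : ℕ => (N : ℂ) / ((N : ℂ) + 1) ^ s) atTop (nhds 0) := by
    rw [tendsto_zero_iff_norm_tendsto_zero]
    have hb : ∀ N : ℕ, ‖(N : ℂ) / ((N : ℂ) + 1) ^ s‖ ≤ ((N : ℝ) + 1) ^ (1 - s.re) := by
      intro N
      have hp : (0 : ℝ) < (N : ℝ) + 1 := by positivity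
      rw [norm_div, show (N : ℂ) + 1 = (((N : ℝ) + 1 : ℝ) : ℂ) by push_cast; ring,
        norm_cpow_real _ hp, Complex.norm_natCast]
      rw [Real.rpow_sub hp, Real.rpow_one]
      gcongr
      linarith
    refine squeeze_zero (fun N => norm_nonneg _) hb ?_
    have := (tendsto_rpow_neg_atTop (y := s.re - 1) (by linarith)).comp
      (tendsto_atTop_add_const_right atTop (1 : ℝ) tendsto_natCast_atTop_atTop)
    simpa [Function.comp_def, neg_sub] using this
  have hz : Tendsto (fun N : ℕ => ∑ n ∈ Finset.range N, 1 / ((n : ℂ) + 1) ^ s) atTop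
      (nhds (riemannZeta s)) := by
    have hsum : HasSum (fun n : ℕ => 1 / ((n : ℂ) + 1) ^ s) (riemannZeta s) := by
      have h := (summable_one_div_nat_cpow.mpr hs).hasSum
      rw [← zeta_eq_tsum_one_div_nat_cpow hs] at h
      have h2 : HasSum (fun n : ℕ => 1 / ((n + 1 : ℕ) : ℂ) ^ s) (riemannZeta s) := by
        refine (hasSum_nat_add_iff (f := fun n : ℕ => 1 / (n : ℂ) ^ s)
          (g := riemannZeta s) 1).mpr ?_
        have h3 : ∑ i ∈ Finset.range 1, 1 / (i : ℂ) ^ s = 0 := by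
          simp [zero_cpow (show s ≠ 0 by rintro rfl; rw [Complex.zero_re] at hs; exact absurd hs (by norm_num))]
        rw [h3, add_zero]
        exact h
      refine h2.congr_fun fun n => ?_
      push_cast
      rfl
    exact hsum.tendsto_sum_nat
  have := h0.add ((hz.const_mul (s - 1)))
  simpa using this

lemma differentiableAt_ztsum (s₀ : ℂ) (hs₀ : 0 < s₀.re) :
    DifferentiableAt ℂ (fun s => ∑' n, zterm s n) s₀ := by
  set r : ℝ := s₀.re / 2 with hr
  have hr0 : 0 < r := by rw [hr]; linarith
  have hball : IsOpen (Metric.ball s₀ r) := Metric.isOpen_ball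
  have hre : ∀ s ∈ Metric.ball s₀ r, s₀.re / 2 < s.re := by
    intro s hsb
    have h1 : |(s - s₀).re| ≤ ‖s - s₀‖ := Complex.abs_re_le_norm (s - s₀)
    rw [Metric.mem_ball, dist_eq_norm] at hsb
    have := abs_lt.mp (lt_of_le_of_lt h1 hsb)
    simp only [Complex.sub_re] at this
    linarith [this.1]
  set M : ℝ := (‖s₀‖ + r) * (‖s₀‖ + r + 1) with hM
  have key : DifferentiableOn ℂ (fun s => ∑' n, zterm s n) (Metric.ball s₀ r) := by
    refine differentiableOn_tsum_of_summable_norm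
      (u := fun n : ℕ => M * ((n : ℝ) + 1) ^ (-s₀.re / 2 - 1))
      (((summable_aux _ (by linarith)).mul_left M)) (fun n => ?_) hball (fun n s hsb => ?_)
    · -- differentiability of each term
      intro s hsb
      refine DifferentiableAt.differentiableWithinAt ?_
      exact (((differentiableAt_const ((n : ℂ) + 1)).div
          (differentiableAt_id.const_cpow (Or.inl (natc_add_two_ne n))) (cpow2_ne n s)).sub
        (((differentiableAt_const ((n : ℂ) + 1)).sub differentiableAt_id).div
          (differentiableAt_id.const_cpow (Or.inl (natc_add_one_ne n))) (cpow1_ne n s)))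
    · -- bound
      have hsre : 0 < s.re := lt_trans (by linarith) (hre s hsb)
      have hnorm : ‖s‖ ≤ ‖s₀‖ + r := by
        rw [Metric.mem_ball, dist_eq_norm] at hsb
        calc ‖s‖ = ‖s₀ + (s - s₀)‖ := by ring_nf
          _ ≤ ‖s₀‖ + ‖s - s₀‖ := norm_add_le _ _
          _ ≤ ‖s₀‖ + r := by linarith [hsb.le]
      calc ‖zterm s n‖ ≤ ‖s‖ * ‖s + 1‖ * ((n : ℝ) + 1) ^ (-s.re - 1) :=
            zterm_bound s hsre n
        _ ≤ M * ((n : ℝ) + 1) ^ (-s₀.re / 2 - 1) := by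
            have h1 : ‖s + 1‖ ≤ ‖s₀‖ + r + 1 := by
              calc ‖s + 1‖ ≤ ‖s‖ + 1 := norm_add_le s 1 |>.trans (by norm_num)
                _ ≤ ‖s₀‖ + r + 1 := by linarith
            have h2 : ((n : ℝ) + 1) ^ (-s.re - 1) ≤ ((n : ℝ) + 1) ^ (-s₀.re / 2 - 1) := by
              refine Real.rpow_le_rpow_of_exponent_le (le_add_of_nonneg_left (Nat.cast_nonneg n)) ?_
              have := hre s hsb
              linarith
            rw [hM]
            have hb : (0:ℝ) ≤ ((n : ℝ) + 1) ^ (-s.re - 1) := by positivity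
            refine mul_le_mul (mul_le_mul hnorm h1 (norm_nonneg _)
              (by positivity)) h2 hb (by positivity)
  exact key.differentiableAt (hball.mem_nhds (Metric.mem_ball_self hr0))

lemma preconn : IsPreconnected ({z : ℂ | 0 < z.re} ∩ {(1 : ℂ)}ᶜ) := by
  set P1 : Set ℂ := {z | 0 < z.re} ∩ {z | 0 < z.im} with hP1def
  set P2 : Set ℂ := {z | 0 < z.re} ∩ {z | z.im < 0} with hP2def
  set P3 : Set ℂ := {z | 0 < z.re} ∩ {z | z.re < 1} with hP3def
  set P4 : Set ℂ := {z | 1 < z.re} with hP4def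
  have hP1 : IsPreconnected P1 :=
    ((convex_halfSpace_re_gt 0).inter (convex_halfSpace_im_gt 0)).isPreconnected
  have hP2 : IsPreconnected P2 :=
    ((convex_halfSpace_re_gt 0).inter (convex_halfSpace_im_lt 0)).isPreconnected
  have hP3 : IsPreconnected P3 :=
    ((convex_halfSpace_re_gt 0).inter (convex_halfSpace_re_lt 1)).isPreconnected
  have hP4 : IsPreconnected P4 := (convex_halfSpace_re_gt 1).isPreconnected
  have hQ1 : IsPreconnected (P3 ∪ P1) := by
    refine IsPreconnected.union (⟨1/2, 1⟩ : ℂ) ?_ ?_ hP3 hP1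
    · exact ⟨by norm_num, by norm_num⟩
    · exact ⟨by norm_num, by norm_num⟩
  have hQ2 : IsPreconnected ((P3 ∪ P1) ∪ P2) := by
    refine IsPreconnected.union (⟨1/2, -1⟩ : ℂ) ?_ ?_ hQ1 hP2
    · exact Or.inl ⟨by norm_num, by norm_num⟩
    · exact ⟨by norm_num, by norm_num⟩
  have hQ3 : IsPreconnected (((P3 ∪ P1) ∪ P2) ∪ P4) := by
    refine IsPreconnected.union (⟨2, 1⟩ : ℂ) ?_ ?_ hQ2 hP4
    · exact Or.inl (Or.inr ⟨by norm_num, by norm_num⟩)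
    · exact (by norm_num : (1:ℝ) < 2)
  have hset : {z : ℂ | 0 < z.re} ∩ {(1 : ℂ)}ᶜ = ((P3 ∪ P1) ∪ P2) ∪ P4 := by
    ext z
    simp only [Set.mem_inter_iff, Set.mem_compl_iff, Set.mem_singleton_iff, Set.mem_union,
      Set.mem_setOf_eq, hP1def, hP2def, hP3def, hP4def]
    constructor
    · rintro ⟨hre, hne⟩
      rcases lt_trichotomy z.im 0 with him | him | him
      · exact Or.inl (Or.inr ⟨hre, him⟩)
      · rcases lt_trichotomy z.re 1 with h | h | h
        · exact Or.inl (Or.inl (Or.inl ⟨hre, h⟩))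
        · exact absurd (Complex.ext h (by simpa using him)) hne
        · exact Or.inr h
      · exact Or.inl (Or.inl (Or.inr ⟨hre, him⟩))
    · rintro (((⟨h1, h2⟩ | ⟨h1, h2⟩) | ⟨h1, h2⟩) | h)
      · exact ⟨h1, fun h => by rw [h] at h2; simp at h2⟩
      · exact ⟨h1, fun h => by rw [h] at h2; simp at h2⟩
      · exact ⟨h1, fun h => by rw [h] at h2; simp at h2⟩
      · exact ⟨by linarith, fun hh => by rw [hh] at h; simp at h⟩
  rw [hset]
  exact hQ3

theorem zeta_series_critical_strip (s : ℂ) (h0 : 0 < s.re) (h1 : s ≠ 1) :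
    HasSum
      (fun n : ℕ =>
        ((n : ℂ) + 1) / ((n : ℂ) + 2) ^ s - (((n : ℂ) + 1) - s) / ((n : ℂ) + 1) ^ s)
      ((s - 1) * riemannZeta s) := by
  set U : Set ℂ := {z : ℂ | 0 < z.re} ∩ {(1 : ℂ)}ᶜ with hUdef
  have hUo : IsOpen U :=
    (isOpen_lt continuous_const continuous_re).inter isOpen_compl_singleton
  have hG : AnalyticOnNhd ℂ (fun z => ∑' n, zterm z n) U :=
    DifferentiableOn.analyticOnNhd
      (fun z hz => (differentiableAt_ztsum z hz.1).differentiableWithinAt) hUo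
  have hH : AnalyticOnNhd ℂ (fun z => (z - 1) * riemannZeta z) U :=
    DifferentiableOn.analyticOnNhd
      (fun z hz => ((differentiableAt_id.sub_const 1).mul
        (differentiableAt_riemannZeta hz.2)).differentiableWithinAt) hUo
  have h2U : (2 : ℂ) ∈ U := ⟨by norm_num, by norm_num⟩
  have hsU : s ∈ U := ⟨h0, h1⟩
  have hEv : (fun z => ∑' n, zterm z n) =ᶠ[nhds (2 : ℂ)] fun z => (z - 1) * riemannZeta z := by
    have hV : {z : ℂ | 1 < z.re} ∈ nhds (2 : ℂ) :=
      (continuous_re.isOpen_preimage _ isOpen_Ioi).mem_nhds (by norm_num)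
    filter_upwards [hV] with z hz
    exact (hasSum_zterm_of_one_lt z hz).tsum_eq
  have heq := hG.eqOn_of_preconnected_of_eventuallyEq hH preconn h2U hEv hsU
  have hfinal := (summable_zterm s h0).hasSum
  simp only at heq
  rw [heq] at hfinal
  exact hfinal
end

section
/- Let f : ℝ → ℝᵐ be injective, let Y ∈ ℝᵐ and X ∈ ℝ with f(X) = Y. Suppose f is continuous and for every ε > 0 there is δ > 0 such that ‖f(x) − Y‖ ≥ δ whenever |x − X| ≥ ε. Then for every family of kernels K_σ(t) = (1/(√(2π)σ))^m · exp(−‖t‖²/(2σ²)) on ℝᵐ, and every bounded continuous g : ℝ → ℝ with x·K-integrability, lim_{σ→0⁺} (∫_ℝ g(x) K_σ(f(x) − Y) dx) / (∫_ℝ K_σ(f(x) − Y) dx) = g(X), provided the denominators are positive and finite for small σ and the limit quotient exists. -/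
open MeasureTheory Filter

lemma exp_ineq_aux {σ σ₁ δ t : ℝ} (hσ : 0 < σ) (hσσ₁ : σ ≤ σ₁) (hσ₁ : 0 < σ₁)
    (hδ : 0 ≤ δ) (ht : δ ≤ t) :
    -t^2/(2*σ^2) ≤ -δ^2/2*(1/σ^2 - 1/σ₁^2) + -t^2/(2*σ₁^2) := by
  have h1 : δ^2 ≤ t^2 := by nlinarith
  have h2 : 1/σ₁^2 ≤ 1/σ^2 := by
    apply one_div_le_one_div_of_le (by positivity)
    nlinarith
  have key : 0 ≤ (t^2 - δ^2) * (1/σ^2 - 1/σ₁^2) :=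
    mul_nonneg (by linarith) (by linarith)
  have e1 : -t^2/(2*σ^2) = -t^2/2 * (1/σ^2) := by field_simp
  have e2 : -t^2/(2*σ₁^2) = -t^2/2 * (1/σ₁^2) := by field_simp
  rw [e1, e2]
  nlinarith [key]

lemma kernel_comp {m : ℕ} {σ σ₁ δ t : ℝ} (hσ : 0 < σ) (hσσ₁ : σ ≤ σ₁) (hσ₁ : 0 < σ₁)
    (hδ : 0 ≤ δ) (ht : δ ≤ t) :
    (1/(Real.sqrt (2*Real.pi)*σ))^m * Real.exp (-t^2/(2*σ^2)) ≤
      (σ₁/σ)^m * Real.exp (-δ^2/2*(1/σ^2 - 1/σ₁^2)) *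
        ((1/(Real.sqrt (2*Real.pi)*σ₁))^m * Real.exp (-t^2/(2*σ₁^2))) := by
  have hs : 0 < Real.sqrt (2*Real.pi) := Real.sqrt_pos.2 (by positivity)
  have hpow : (σ₁/σ)^m * (1/(Real.sqrt (2*Real.pi)*σ₁))^m
      = (1/(Real.sqrt (2*Real.pi)*σ))^m := by
    rw [← mul_pow]; congr 1; field_simp
  calc (1/(Real.sqrt (2*Real.pi)*σ))^m * Real.exp (-t^2/(2*σ^2))
      ≤ (1/(Real.sqrt (2*Real.pi)*σ))^m *
          (Real.exp (-δ^2/2*(1/σ^2 - 1/σ₁^2)) * Real.exp (-t^2/(2*σ₁^2))) := by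
        apply mul_le_mul_of_nonneg_left _ (by positivity)
        rw [← Real.exp_add, Real.exp_le_exp]
        exact exp_ineq_aux hσ hσσ₁ hσ₁ hδ ht
    _ = _ := by rw [← hpow]; ring

lemma ratio_alg {m : ℕ} {σ σ₁ δ r M D₁ : ℝ} (hσ : 0 < σ) (hσ₁ : 0 < σ₁) (hr : 0 < r) :
    2*M*((σ₁/σ)^m * Real.exp (-δ^2/2*(1/σ^2 - 1/σ₁^2)) * D₁) /
      (2*r*((1/(Real.sqrt (2*Real.pi)*σ))^m * Real.exp (-(δ/2)^2/(2*σ^2))))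
    = (2*M*D₁*(σ₁*Real.sqrt (2*Real.pi))^m * Real.exp (δ^2/(2*σ₁^2))/(2*r)) *
        Real.exp (-(3*δ^2/8) * (1/σ^2)) := by
  have hs : 0 < Real.sqrt (2*Real.pi) := Real.sqrt_pos.2 (by positivity)
  have hexp : Real.exp (-δ^2/2*(1/σ^2 - 1/σ₁^2))
      = Real.exp (-(δ/2)^2/(2*σ^2)) *
          (Real.exp (δ^2/(2*σ₁^2)) * Real.exp (-(3*δ^2/8) * (1/σ^2))) := by
    rw [← Real.exp_add, ← Real.exp_add]
    congr 1
    field_simp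
    ring
  have hpow : (σ₁/σ)^m = (1/(Real.sqrt (2*Real.pi)*σ))^m * (σ₁*Real.sqrt (2*Real.pi))^m := by
    rw [← mul_pow]; congr 1; field_simp
  have hP : (1/(Real.sqrt (2*Real.pi)*σ))^m ≠ 0 := by positivity
  have hE : Real.exp (-(δ/2)^2/(2*σ^2)) ≠ 0 := (Real.exp_pos _).ne'
  rw [hexp, hpow]
  field_simp

theorem mollified_inversion {m : ℕ}
    (f : ℝ → EuclideanSpace ℝ (Fin m)) (hf : Function.Injective f)
    (hc : Continuous f)
    (Y : EuclideanSpace ℝ (Fin m)) (X : ℝ) (hXY : f X = Y)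
    (hsep : ∀ ε > (0:ℝ), ∃ δ > (0:ℝ), ∀ x, ε ≤ |x - X| → δ ≤ ‖f x - Y‖)
    (K : ℝ → EuclideanSpace ℝ (Fin m) → ℝ)
    (hK : ∀ σ t, K σ t =
        (1 / (Real.sqrt (2 * Real.pi) * σ)) ^ m * Real.exp (-‖t‖ ^ 2 / (2 * σ ^ 2)))
    (g : ℝ → ℝ) (hg : Continuous g) (hgb : ∃ M, ∀ x, |g x| ≤ M)
    (hxint : ∀ σ > (0:ℝ), Integrable (fun x => x * K σ (f x - Y)))
    (hden : ∃ σ₀ > (0:ℝ), ∀ σ, 0 < σ → σ < σ₀ →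
        (0 < ∫ x, K σ (f x - Y)) ∧ Integrable (fun x => K σ (f x - Y))) :
    Tendsto (fun σ : ℝ =>
        (∫ x, g x * K σ (f x - Y)) / (∫ x, K σ (f x - Y)))
      (nhdsWithin 0 (Set.Ioi 0)) (nhds (g X)) := by
  obtain ⟨M, hM⟩ := hgb
  have hM0 : 0 ≤ M := le_trans (abs_nonneg _) (hM 0)
  obtain ⟨σ₀, hσ₀, hden⟩ := hden
  set σ₁ := σ₀/2 with hσ₁def
  have hσ₁ : 0 < σ₁ := by positivity
  have hσ₁lt : σ₁ < σ₀ := half_lt_self hσ₀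
  have hFnn : ∀ σ, 0 < σ → ∀ x, 0 ≤ K σ (f x - Y) := by
    intro σ hσ x; rw [hK]; positivity
  have hInt1 : Integrable (fun x => K σ₁ (f x - Y)) := (hden σ₁ hσ₁ hσ₁lt).2
  set D₁ := ∫ x, K σ₁ (f x - Y) with hD₁def
  have hD₁0 : 0 ≤ D₁ := integral_nonneg (hFnn σ₁ hσ₁)
  rw [Metric.tendsto_nhds]
  intro ε hε
  obtain ⟨η, hη0, hη⟩ := Metric.continuous_iff.mp hg X (ε/2) (by positivity)
  obtain ⟨δ, hδ0, hδ⟩ := hsep η hη0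
  obtain ⟨r', hr'0, hr'⟩ := Metric.continuous_iff.mp hc X (δ/2) (by positivity)
  set r := r'/2 with hrdef
  have hr0 : 0 < r := by positivity
  have hfr : ∀ x ∈ Set.Icc (X - r) (X + r), ‖f x - Y‖ ≤ δ/2 := by
    intro x hx
    have h1 : dist x X < r' := by
      rw [Real.dist_eq]
      have : |x - X| ≤ r := abs_le.2 ⟨by linarith [hx.1], by linarith [hx.2]⟩
      linarith [half_lt_self hr'0]
    have := hr' x h1
    rw [dist_eq_norm, hXY] at this
    exact this.le
  set C := 2*M*D₁*(σ₁*Real.sqrt (2*Real.pi))^m * Real.exp (δ^2/(2*σ₁^2))/(2*r) with hCdef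
  -- the error term tends to 0
  have hEt : Tendsto (fun σ : ℝ => C * Real.exp (-(3*δ^2/8) * (1/σ^2)))
      (nhdsWithin 0 (Set.Ioi 0)) (nhds 0) := by
    have hsq : Tendsto (fun σ : ℝ => σ^2) (nhdsWithin 0 (Set.Ioi 0))
        (nhdsWithin 0 (Set.Ioi 0)) := by
      apply tendsto_nhdsWithin_of_tendsto_nhds_of_eventually_within
      · have h2 : Tendsto (fun σ : ℝ => σ^2) (nhds 0) (nhds 0) := by
          simpa using (continuous_pow 2).tendsto (0:ℝ)
        exact h2.mono_left nhdsWithin_le_nhds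
      · filter_upwards [self_mem_nhdsWithin] with σ hσ
        exact pow_pos (show (0:ℝ) < σ from hσ) 2
    have hinv : Tendsto (fun σ : ℝ => (σ^2)⁻¹) (nhdsWithin 0 (Set.Ioi 0)) atTop :=
      tendsto_inv_nhdsGT_zero.comp hsq
    have h38 : 0 < 3*δ^2/8 := by positivity
    have hmul : Tendsto (fun σ : ℝ => (3*δ^2/8) * (σ^2)⁻¹)
        (nhdsWithin 0 (Set.Ioi 0)) atTop := hinv.const_mul_atTop h38
    have hneg : Tendsto (fun σ : ℝ => -(3*δ^2/8) * (1/σ^2))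
        (nhdsWithin 0 (Set.Ioi 0)) atBot := by
      have := tendsto_neg_atTop_atBot.comp hmul
      refine this.congr fun σ => ?_
      simp [one_div]
    have := (Real.tendsto_exp_atBot.comp hneg).const_mul C
    simpa using this
  have hEx : ∀ᶠ σ in nhdsWithin 0 (Set.Ioi 0),
      C * Real.exp (-(3*δ^2/8) * (1/σ^2)) < ε/2 :=
    hEt.eventually_lt_const (by positivity)
  have hmem : Set.Ioo (0:ℝ) σ₁ ∈ nhdsWithin 0 (Set.Ioi 0) :=
    Ioo_mem_nhdsGT_of_mem ⟨le_refl 0, hσ₁⟩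
  filter_upwards [hEx, eventually_mem_set.2 hmem] with σ hEσ hσmem
  obtain ⟨hσ, hσlt⟩ := hσmem
  have hσσ₀ : σ < σ₀ := hσlt.trans hσ₁lt
  obtain ⟨hDpos, hDint⟩ := hden σ hσ hσσ₀
  set A := (σ₁/σ)^m * Real.exp (-δ^2/2*(1/σ^2 - 1/σ₁^2)) with hAdef
  set c := (1/(Real.sqrt (2*Real.pi)*σ))^m * Real.exp (-(δ/2)^2/(2*σ^2)) with hcdef
  have hA0 : 0 < A := by positivity
  have hc0 : 0 < c := by positivity
  set S := {x : ℝ | η ≤ |x - X|} with hSdef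
  have hSm : MeasurableSet S := by
    have : IsClosed S :=
      isClosed_le continuous_const ((continuous_id.sub continuous_const).abs)
    exact this.measurableSet
  have hIndInt : Integrable (S.indicator fun x => K σ (f x - Y)) := hDint.indicator hSm
  have hgm : AEStronglyMeasurable (fun x => |g x - g X|) volume :=
    ((hg.sub continuous_const).abs).aestronglyMeasurable
  have habs : ∀ x, |g x - g X| ≤ 2*M := by
    intro x
    calc |g x - g X| ≤ |g x| + |g X| := abs_sub _ _
      _ ≤ 2*M := by have := hM x; have := hM X; linarith
  have hgKint : Integrable (fun x => |g x - g X| * K σ (f x - Y)) :=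
    hDint.bdd_mul (c := 2*M) hgm (Filter.Eventually.of_forall fun x => by simpa using habs x)
  have hgKint2 : Integrable (fun x => g x * K σ (f x - Y)) :=
    hDint.bdd_mul (c := M) hg.aestronglyMeasurable (Filter.Eventually.of_forall fun x => by simpa using hM x)
  set D := ∫ x, K σ (f x - Y) with hDdef
  -- Step 1: split the integral
  have step1 : ∫ x, |g x - g X| * K σ (f x - Y) ≤
      ε/2 * D + 2*M * ∫ x, S.indicator (fun x => K σ (f x - Y)) x := by
    have hle : ∀ x, |g x - g X| * K σ (f x - Y) ≤
        ε/2 * K σ (f x - Y) + 2*M * S.indicator (fun x => K σ (f x - Y)) x := by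
      intro x
      by_cases hx : x ∈ S
      · rw [Set.indicator_of_mem hx]
        have h1 := mul_le_mul_of_nonneg_right (habs x) (hFnn σ hσ x)
        have h2 : 0 ≤ ε/2 * K σ (f x - Y) :=
          mul_nonneg (by linarith) (hFnn σ hσ x)
        linarith
      · rw [Set.indicator_of_notMem hx]
        have hxX : |x - X| < η := by
          simpa [hSdef] using not_le.1 (by simpa [hSdef] using hx)
        have h1 : |g x - g X| < ε/2 := by
          have := hη x (by rwa [Real.dist_eq])
          rwa [Real.dist_eq] at this
        have := mul_le_mul_of_nonneg_right h1.le (hFnn σ hσ x)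
        simpa using this
    calc ∫ x, |g x - g X| * K σ (f x - Y)
        ≤ ∫ x, (ε/2 * K σ (f x - Y) + 2*M * S.indicator (fun x => K σ (f x - Y)) x) :=
          integral_mono hgKint ((hDint.const_mul _).add (hIndInt.const_mul _)) hle
      _ = _ := by
          rw [integral_add (hDint.const_mul _) (hIndInt.const_mul _),
            integral_const_mul, integral_const_mul]
  -- Step 2: tail bound
  have step2 : ∫ x, S.indicator (fun x => K σ (f x - Y)) x ≤ A * D₁ := by
    have hle : ∀ x, S.indicator (fun x => K σ (f x - Y)) x ≤ A * K σ₁ (f x - Y) := by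
      intro x
      by_cases hx : x ∈ S
      · rw [Set.indicator_of_mem hx]
        have ht : δ ≤ ‖f x - Y‖ := hδ x (by simpa [hSdef] using hx)
        rw [hK, hK, hAdef]
        exact kernel_comp hσ hσlt.le hσ₁ hδ0.le ht
      · rw [Set.indicator_of_notMem hx]
        exact mul_nonneg hA0.le (hFnn σ₁ hσ₁ x)
    calc ∫ x, S.indicator (fun x => K σ (f x - Y)) x
        ≤ ∫ x, A * K σ₁ (f x - Y) := integral_mono hIndInt (hInt1.const_mul _) hle
      _ = A * D₁ := integral_const_mul _ _
  -- Step 3: denominator lower bound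
  have step3 : 2*r*c ≤ D := by
    have hlow : ∀ x ∈ Set.Icc (X - r) (X + r), c ≤ K σ (f x - Y) := by
      intro x hx
      rw [hK, hcdef]
      apply mul_le_mul_of_nonneg_left _ (by positivity)
      rw [Real.exp_le_exp]
      have ht : ‖f x - Y‖ ≤ δ/2 := hfr x hx
      have h1 : ‖f x - Y‖^2 ≤ (δ/2)^2 := by nlinarith [norm_nonneg (f x - Y)]
      have h2 : (0:ℝ) < 2*σ^2 := by positivity
      exact div_le_div_of_nonneg_right (by linarith) h2.le
    calc 2*r*c = ∫ _x in Set.Icc (X - r) (X + r), c := by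
          rw [setIntegral_const, measureReal_def, Real.volume_Icc]
          rw [ENNReal.toReal_ofReal (by linarith)]
          simp only [smul_eq_mul]
          ring
      _ ≤ ∫ x in Set.Icc (X - r) (X + r), K σ (f x - Y) := by
          apply setIntegral_mono_on _ hDint.integrableOn measurableSet_Icc hlow
          exact integrableOn_const (by rw [Real.volume_Icc]; exact ENNReal.ofReal_ne_top)
      _ ≤ D := setIntegral_le_integral hDint (Filter.Eventually.of_forall (hFnn σ hσ))
  -- numerator identity
  have hnum : (∫ x, g x * K σ (f x - Y)) - g X * D = ∫ x, (g x - g X) * K σ (f x - Y) := by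
    rw [hDdef, ← integral_const_mul,
      ← integral_sub hgKint2 (hDint.const_mul (g X))]
    congr 1
    ext x
    ring
  have hGKint : Integrable (fun x => (g x - g X) * K σ (f x - Y)) :=
    hDint.bdd_mul (c := 2*M) (hg.sub continuous_const).aestronglyMeasurable
      (Filter.Eventually.of_forall fun x => by simpa using habs x)
  have habs2 : |∫ x, (g x - g X) * K σ (f x - Y)| ≤
      ∫ x, |g x - g X| * K σ (f x - Y) := by
    have h1 : ‖∫ x, (g x - g X) * K σ (f x - Y)‖ ≤ ∫ x, ‖(g x - g X) * K σ (f x - Y)‖ :=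
      norm_integral_le_integral_norm _
    simp only [Real.norm_eq_abs] at h1
    calc |∫ x, (g x - g X) * K σ (f x - Y)|
        ≤ ∫ x, |(g x - g X) * K σ (f x - Y)| := h1
      _ = ∫ x, |g x - g X| * K σ (f x - Y) := by
          congr 1
          ext x
          rw [abs_mul, abs_of_nonneg (hFnn σ hσ x)]
  -- final estimate
  have hDne : D ≠ 0 := hDpos.ne'
  rw [Real.dist_eq]
  have e : (∫ x, g x * K σ (f x - Y)) / D - g X
      = (∫ x, (g x - g X) * K σ (f x - Y)) / D := by
    rw [← hnum]; field_simp
  have key : |(∫ x, g x * K σ (f x - Y)) / D - g X| ≤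
      ε/2 + C * Real.exp (-(3*δ^2/8) * (1/σ^2)) := by
    rw [e, abs_div, abs_of_pos hDpos]
    have hnum_le : |∫ x, (g x - g X) * K σ (f x - Y)| ≤ ε/2 * D + 2*M*(A*D₁) := by
      calc |∫ x, (g x - g X) * K σ (f x - Y)|
          ≤ ∫ x, |g x - g X| * K σ (f x - Y) := habs2
        _ ≤ ε/2 * D + 2*M * ∫ x, S.indicator (fun x => K σ (f x - Y)) x := step1
        _ ≤ ε/2 * D + 2*M*(A*D₁) := by
            have := mul_le_mul_of_nonneg_left step2 (by linarith : (0:ℝ) ≤ 2*M)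
            linarith
    calc |∫ x, (g x - g X) * K σ (f x - Y)| / D
        ≤ (ε/2 * D + 2*M*(A*D₁)) / D :=
          div_le_div_of_nonneg_right hnum_le hDpos.le
      _ = ε/2 + 2*M*(A*D₁)/D := by field_simp
      _ ≤ ε/2 + 2*M*(A*D₁)/(2*r*c) := by
          have h1 : 0 ≤ 2*M*(A*D₁) := mul_nonneg (by linarith) (mul_nonneg hA0.le hD₁0)
          have h2 : (0:ℝ) < 2*r*c := by positivity
          exact add_le_add_right (div_le_div_of_nonneg_left h1 h2 step3) _
      _ = ε/2 + C * Real.exp (-(3*δ^2/8) * (1/σ^2)) := by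
          rw [hAdef, hcdef, hCdef]
          congr 1
          exact ratio_alg hσ hσ₁ hr0
  linarith [key, hEσ]
end
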